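/- arXiv:1105.3870 — 2 statements merged into one kernel-verified Lean document; each statement's English description precedes it below -/
import Mathlib

section
/- For any a, b ∈ ℝⁿ and p ∈ [2, ∞), there exists a constant c_p ∈ (0,1] (depending only on p) such that (|a|^{p−2}a − |b|^{p−2}b)·(a − b) ≥ c_p |a − b|^p. -/
/-!
Write `α = ‖a‖ ^ (p - 2)` and `β = ‖b‖ ^ (p - 2)`. Polarization gives
`⟪α a - β b, a - b⟫ = (α + β) / 2 * ‖a - b‖² + (α - β) (‖a‖² - ‖b‖²) / 2`, and the second term is
nonnegative because `x ↦ x ^ (p - 2)` and `x ↦ x²` are both monotone on `[0, ∞)`. Finally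
`‖a - b‖ ^ (p - 2) ≤ (‖a‖ + ‖b‖) ^ (p - 2) ≤ 2 ^ (p - 2) (α + β)`, which yields the constant
`c_p = 2 ^ (1 - p)`.
-/

open Real

namespace Real

lemma add_rpow_le_two_rpow_mul_rpow_add_rpow {s t q : ℝ} (hs : 0 ≤ s) (ht : 0 ≤ t) (hq : 0 ≤ q) :
    (s + t) ^ q ≤ 2 ^ q * (s ^ q + t ^ q) := calc
  (s + t) ^ q ≤ (2 * max s t) ^ q :=
    rpow_le_rpow (add_nonneg hs ht) (two_mul (max s t) ▸ add_le_add (le_max_left s t) (le_max_right s t)) hq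
  _ = 2 ^ q * max s t ^ q := mul_rpow zero_le_two (le_max_of_le_left hs)
  _ = 2 ^ q * max (s ^ q) (t ^ q) := by rw [rpow_max hs ht hq]
  _ ≤ 2 ^ q * (s ^ q + t ^ q) := by
    gcongr; exact max_le_add_of_nonneg (rpow_nonneg hs q) (rpow_nonneg ht q)

lemma rpow_sub_rpow_mul_sq_sub_sq_nonneg {s t q : ℝ} (hs : 0 ≤ s) (ht : 0 ≤ t) (hq : 0 ≤ q) :
    0 ≤ (s ^ q - t ^ q) * (s ^ 2 - t ^ 2) := by
  rcases le_total s t with hst | hts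
  · have hpow : s ^ q ≤ t ^ q := rpow_le_rpow hs hst hq
    have hsq : s ^ 2 ≤ t ^ 2 := by gcongr
    exact mul_nonneg_of_nonpos_of_nonpos (by linarith) (by linarith)
  · have hpow : t ^ q ≤ s ^ q := rpow_le_rpow ht hts hq
    have hsq : t ^ 2 ≤ s ^ 2 := by gcongr
    exact mul_nonneg (by linarith) (by linarith)

end Real

section InnerProductSpace

variable {E : Type*} [NormedAddCommGroup E] [InnerProductSpace ℝ E]

lemma real_inner_smul_sub_smul_sub_eq (α β : ℝ) (a b : E) :
    inner ℝ (α • a - β • b) (a - b) =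
      (α + β) / 2 * ‖a - b‖ ^ 2 + (α - β) * (‖a‖ ^ 2 - ‖b‖ ^ 2) / 2 := by
  simp only [norm_sub_sq_real, inner_sub_left, inner_sub_right, real_inner_smul_left,
    real_inner_self_eq_norm_sq, real_inner_comm b a]
  ring

lemma half_rpow_add_rpow_mul_norm_sub_sq_le_inner {p : ℝ} (hp : 2 ≤ p) (a b : E) :
    (‖a‖ ^ (p - 2) + ‖b‖ ^ (p - 2)) / 2 * ‖a - b‖ ^ 2 ≤
      inner ℝ (‖a‖ ^ (p - 2) • a - ‖b‖ ^ (p - 2) • b) (a - b) := by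
  have hmono := rpow_sub_rpow_mul_sq_sub_sq_nonneg (norm_nonneg a) (norm_nonneg b)
    (sub_nonneg.2 hp)
  rw [real_inner_smul_sub_smul_sub_eq]
  linarith

lemma half_rpow_sub_one_mul_norm_sub_rpow_le_inner {p : ℝ} (hp : 2 ≤ p) (a b : E) :
    (1 / 2) ^ (p - 1) * ‖a - b‖ ^ p ≤
      inner ℝ (‖a‖ ^ (p - 2) • a - ‖b‖ ^ (p - 2) • b) (a - b) := by
  have hq : 0 ≤ p - 2 := sub_nonneg.2 hp
  have hd : ‖a - b‖ ^ (p - 2) ≤ 2 ^ (p - 2) * (‖a‖ ^ (p - 2) + ‖b‖ ^ (p - 2)) :=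
    (rpow_le_rpow (norm_nonneg _) (norm_sub_le a b) hq).trans
      (add_rpow_le_two_rpow_mul_rpow_add_rpow (norm_nonneg a) (norm_nonneg b) hq)
  have hconst : (1 / 2 : ℝ) ^ (p - 1) * 2 ^ (p - 2) = 1 / 2 := by
    rw [div_rpow zero_le_one zero_le_two, one_rpow, div_mul_eq_mul_div, one_mul,
      ← rpow_sub zero_lt_two, show p - 2 - (p - 1) = -1 by ring, rpow_neg_one, one_div]
  calc (1 / 2) ^ (p - 1) * ‖a - b‖ ^ p
      = (1 / 2) ^ (p - 1) * ‖a - b‖ ^ (p - 2) * ‖a - b‖ ^ 2 := by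
        rw [mul_assoc, ← rpow_two, ← rpow_add' (norm_nonneg _) (by linarith), sub_add_cancel]
    _ ≤ (1 / 2) ^ (p - 1) * (2 ^ (p - 2) * (‖a‖ ^ (p - 2) + ‖b‖ ^ (p - 2))) * ‖a - b‖ ^ 2 := by
        gcongr
    _ = (‖a‖ ^ (p - 2) + ‖b‖ ^ (p - 2)) / 2 * ‖a - b‖ ^ 2 := by
        rw [← mul_assoc, hconst]; ring
    _ ≤ _ := half_rpow_add_rpow_mul_norm_sub_sq_le_inner hp a b

end InnerProductSpace

open EuclideanSpace

/-- For `p ∈ [2, ∞)` there is a constant `c_p ∈ (0,1]` such that for all `a, b ∈ ℝⁿ`,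
`⟨|a|^{p-2} a - |b|^{p-2} b, a - b⟩ ≥ c_p |a - b|^p`. -/
theorem stmt4 (n : ℕ) (p : ℝ) (hp : 2 ≤ p) :
    ∃ c : ℝ, 0 < c ∧ c ≤ 1 ∧
      ∀ a b : EuclideanSpace ℝ (Fin n),
        c * ‖a - b‖ ^ p ≤
          inner ℝ ((‖a‖ ^ (p - 2) : ℝ) • a - (‖b‖ ^ (p - 2) : ℝ) • b) (a - b) :=
  ⟨(1 / 2) ^ (p - 1), by positivity, rpow_le_one (by norm_num) (by norm_num) (by linarith),
    half_rpow_sub_one_mul_norm_sub_rpow_le_inner hp⟩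
end

section
/- Let (X, Σ, ν) be a measure space and B: X × ℝ → [0,∞] a Musielak-Orlicz function satisfying the (∇₂⁰)-condition: there is a ν-null set X₀ and, for every ε > 0, a constant α(ε) > 0 such that B(x, α t) ≤ α ε B(x, t) for all t ∈ ℝ and x ∈ X∖X₀. Then for the modular ρ_B(u) := ∫_X B(x, u(x)) dν and the Luxemburg norm ‖u‖_B := inf{λ > 0 : ρ_B(u/λ) ≤ 1}, one has ρ_B(u)/‖u‖_B → +∞ as ‖u‖_B → +∞. -/
/-!
Convexity and `B(x, 0) = 0` give `B(x, s/c) ≤ B(x, s)/c` for `c ≥ 1`. Combined with the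
(∇₂⁰)-condition for `ε = 1/λ`, with constant `a`, this yields `k B(x, u/k) ≤ B(x, u)/λ` whenever
`a k ≥ 1`. For `k` below the Luxemburg norm `‖u‖_B` we have `ρ_B(u/k) > 1`, so integrating gives
`λ k < ρ_B(u)`; letting `k ↑ ‖u‖_B` gives `λ ‖u‖_B ≤ ρ_B(u)` as soon as `‖u‖_B > max 1 (1/a)`.
-/

open MeasureTheory Filter Set

theorem ConvexOn.map_smul_le {E : Type*} [AddCommGroup E] [Module ℝ E] {s : Set E}
    {f : E → ℝ} (hf : ConvexOn ℝ s f) (h₀ : (0 : E) ∈ s) (hf₀ : f 0 ≤ 0) {x : E} (hx : x ∈ s)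
    {θ : ℝ} (hθ₀ : 0 ≤ θ) (hθ₁ : θ ≤ 1) : f (θ • x) ≤ θ * f x := by
  have h := hf.2 hx h₀ hθ₀ (sub_nonneg.2 hθ₁) (add_sub_cancel θ 1)
  simp only [smul_zero, add_zero, smul_eq_mul] at h
  nlinarith

theorem ConvexOn.mul_map_div_le_of_map_mul_le {f : ℝ → ℝ} (hf : ConvexOn ℝ univ f)
    (hf₀ : f 0 ≤ 0) {a ε t k : ℝ} (ha : 0 < a) (hfa : f (a * t) ≤ a * ε * f t)
    (hk : 1 ≤ a * k) : k * f (t / k) ≤ ε * f t := by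
  have hak : 0 < a * k := one_pos.trans_le hk
  have hk₀ : 0 < k := pos_of_mul_pos_right hak ha.le
  have hdiv : t / k = (a * k)⁻¹ • (a * t) := by
    rw [smul_eq_mul]
    field_simp
  have hconv : f (t / k) ≤ (a * k)⁻¹ * f (a * t) :=
    hdiv ▸ hf.map_smul_le (mem_univ 0) hf₀ (mem_univ _) (inv_nonneg.2 hak.le)
      (inv_le_one_of_one_le₀ hk)
  calc k * f (t / k) ≤ k * ((a * k)⁻¹ * (a * ε * f t)) := by gcongr; exact hconv.trans (by gcongr)
    _ = ε * f t := by field_simp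

namespace MusielakOrlicz

variable {X : Type*} [MeasurableSpace X] {ν : Measure X} {B : X → ℝ → ℝ} {u : X → ℝ}

variable (ν B) in
noncomputable def modular (u : X → ℝ) : ℝ := ∫ x, B x (u x) ∂ν

variable (ν B) in
noncomputable def luxemburgNorm (u : X → ℝ) : ℝ :=
  sInf {k : ℝ | 0 < k ∧ modular ν B (fun x => u x / k) ≤ 1}

theorem one_lt_modular_div_of_lt_luxemburgNorm {k : ℝ} (hk : 0 < k)
    (hkN : k < luxemburgNorm ν B u) : 1 < modular ν B (fun x => u x / k) := by
  by_contra! h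
  exact notMem_of_lt_csInf hkN ⟨0, fun _ hk' => hk'.1.le⟩ ⟨hk, h⟩

theorem integrable_of_one_lt_luxemburgNorm (h : 1 < luxemburgNorm ν B u) :
    Integrable (fun x => B x (u x)) ν := by
  have h₁ := one_lt_modular_div_of_lt_luxemburgNorm one_pos h
  simp only [div_one, modular] at h₁
  exact .of_integral_ne_zero (one_pos.trans h₁).ne'

theorem lt_mul_modular_of_lt_luxemburgNorm {k ε : ℝ} (hk : 0 < k)
    (hkN : k < luxemburgNorm ν B u) (hint : Integrable (fun x => B x (u x)) ν)
    (hB : ∀ᵐ x ∂ν, k * B x (u x / k) ≤ ε * B x (u x)) : k < ε * modular ν B u := by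
  have hgt := one_lt_modular_div_of_lt_luxemburgNorm hk hkN
  have hint_k : Integrable (fun x => B x (u x / k)) ν :=
    .of_integral_ne_zero (one_pos.trans hgt).ne'
  calc k < k * modular ν B (fun x => u x / k) := lt_mul_of_one_lt_right hk hgt
    _ = ∫ x, k * B x (u x / k) ∂ν := (integral_const_mul _ _).symm
    _ ≤ ∫ x, ε * B x (u x) ∂ν := integral_mono_ae (hint_k.const_mul k) (hint.const_mul ε) hB
    _ = ε * modular ν B u := integral_const_mul _ _

end MusielakOrlicz

open MusielakOrlicz in
theorem stmt11_general {X : Type*} [MeasurableSpace X] (ν : Measure X)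
    (B : X → ℝ → ℝ)
    (hMO : ∀ᵐ x ∂ν,
      (∀ t, 0 ≤ B x t) ∧ (∀ t, B x (-t) = B x t) ∧ ConvexOn ℝ Set.univ (B x) ∧
        B x 0 = 0 ∧ ContinuousAt (B x) 0 ∧
        Tendsto (fun t => B x t / t) atTop atTop)
    (hnabla : ∃ X₀ : Set X, ν X₀ = 0 ∧
      ∀ ε : ℝ, 0 < ε → ∃ a : ℝ, 0 < a ∧
        ∀ t : ℝ, ∀ x ∉ X₀, B x (a * t) ≤ a * ε * B x t) :
    ∀ lam : ℝ, 0 < lam → ∃ M : ℝ, 0 < M ∧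
      ∀ u : X → ℝ, Measurable u →
        M < sInf {k : ℝ | 0 < k ∧ ∫ x, B x (u x / k) ∂ν ≤ 1} →
        lam * sInf {k : ℝ | 0 < k ∧ ∫ x, B x (u x / k) ∂ν ≤ 1} ≤
          ∫ x, B x (u x) ∂ν := by
  intro lam hlam
  obtain ⟨X₀, hX₀, hN⟩ := hnabla
  obtain ⟨a, ha, hBa⟩ := hN lam⁻¹ (inv_pos.2 hlam)
  refine ⟨max 1 a⁻¹, lt_max_of_lt_left one_pos, fun u _ hM => ?_⟩
  change max 1 a⁻¹ < luxemburgNorm ν B u at hM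
  change lam * luxemburgNorm ν B u ≤ modular ν B u
  have hint := integrable_of_one_lt_luxemburgNorm ((le_max_left _ _).trans_lt hM)
  by_contra! hlt
  set k := max (max 1 a⁻¹) (modular ν B u / lam)
  have hkN : k < luxemburgNorm ν B u := max_lt hM ((div_lt_iff₀' hlam).2 hlt)
  have hak : 1 ≤ a * k := (inv_le_iff_one_le_mul₀' ha).1 ((le_max_right _ _).trans (le_max_left _ _))
  have hpt : ∀ᵐ x ∂ν, k * B x (u x / k) ≤ lam⁻¹ * B x (u x) := by
    filter_upwards [hMO, measure_eq_zero_iff_ae_notMem.1 hX₀] with x ⟨_, _, hconv, h0, _⟩ hx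
    exact hconv.mul_map_div_le_of_map_mul_le h0.le ha (hBa _ x hx) hak
  have hk₀ : 0 < k := one_pos.trans_le ((le_max_left _ _).trans (le_max_left _ _))
  have hk := lt_mul_modular_of_lt_luxemburgNorm hk₀ hkN hint hpt
  have : modular ν B u / lam ≤ k := le_max_right _ _
  rw [inv_mul_eq_div] at hk
  linarith

/-- If a Musielak-Orlicz function `B` satisfies the (∇₂⁰)-condition, then the modular
`ρ_B(u) = ∫ B(x, u x) dν` dominates any multiple of the Luxemburg norm `‖u‖_B` for
functions of large norm: for every `λ > 0` there is `M > 0` such that `‖u‖_B > M`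
implies `ρ_B(u) ≥ λ ‖u‖_B`. -/
theorem stmt11 {X : Type*} [MeasurableSpace X] (ν : Measure X)
    (B : X → ℝ → ℝ)
    (hmeas : ∀ t : ℝ, Measurable fun x => B x t)
    (hMO : ∀ᵐ x ∂ν,
      (∀ t, 0 ≤ B x t) ∧ (∀ t, B x (-t) = B x t) ∧ ConvexOn ℝ Set.univ (B x) ∧
        B x 0 = 0 ∧ ContinuousAt (B x) 0 ∧
        Tendsto (fun t => B x t / t) atTop atTop)
    (hnabla : ∃ X₀ : Set X, ν X₀ = 0 ∧
      ∀ ε : ℝ, 0 < ε → ∃ a : ℝ, 0 < a ∧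
        ∀ t : ℝ, ∀ x ∉ X₀, B x (a * t) ≤ a * ε * B x t) :
    ∀ lam : ℝ, 0 < lam → ∃ M : ℝ, 0 < M ∧
      ∀ u : X → ℝ, Measurable u →
        M < sInf {k : ℝ | 0 < k ∧ ∫ x, B x (u x / k) ∂ν ≤ 1} →
        lam * sInf {k : ℝ | 0 < k ∧ ∫ x, B x (u x / k) ∂ν ≤ 1} ≤
          ∫ x, B x (u x) ∂ν :=
  stmt11_general ν B hMO hnabla
end
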